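/- For every positive integer n and every real number α, the n×n Hankel determinant det(α·c_{i+j+1} + c_{i+j+2})_{i,j=0}^{n−1} equals g_{2n+1}(α) · det(c_{i+j+1})_{i,j=0}^{n−1}. -/
import Mathlib


/-- `dyckGF T n k` is the weighted Dyck path generating function `c(n,k)`:
`c(0,k) = [k = 0]`, `c(n,k) = 0` for `k < 0`, and
`c(n,k) = c(n-1,k-1) + T_k c(n-1,k+1)` for `n ≥ 1`, `k ≥ 0`. -/
def dyckGF (T : ℕ → ℝ) : ℕ → ℤ → ℝ
  | 0, k => if k = 0 then 1 else 0
  | n+1, k =>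
      if k < 0 then 0
      else dyckGF T n (k-1) + T k.toNat * dyckGF T n (k+1)

/-- The polynomials `g_n(α)`: `g_0 = 1`, `g_1 = 1`,
`g_{2n}(α) = α g_{2n-1}(α) + T_{2n-2} g_{2n-2}(α)` and
`g_{2n+1}(α) = g_{2n}(α) + T_{2n-1} g_{2n-1}(α)` for `n ≥ 1`. -/
def gpoly (T : ℕ → ℝ) (α : ℝ) : ℕ → ℝ
  | 0 => 1
  | 1 => 1
  | n+2 => (if (n+2) % 2 = 0 then α else 1) * gpoly T α (n+1) + T n * gpoly T α n

namespace HankelAux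

variable (T : ℕ → ℝ)

lemma dyck_succ (n : ℕ) (k : ℕ) :
    dyckGF T (n+1) (k : ℤ) = dyckGF T n ((k : ℤ)-1) + T k * dyckGF T n ((k : ℤ)+1) := by
  rw [dyckGF]
  simp

lemma dyck_neg (n : ℕ) (k : ℤ) (hk : k < 0) : dyckGF T n k = 0 := by
  cases n with
  | zero => rw [dyckGF]; simp [show k ≠ 0 by omega]
  | succ n => rw [dyckGF]; simp [hk]

lemma dyck_gt : ∀ (n : ℕ) (k : ℕ), n < k → dyckGF T n (k : ℤ) = 0 := by
  intro n
  induction n with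
  | zero => intro k hk; rw [dyckGF]; simp; omega
  | succ n ih =>
    intro k hk
    rw [dyck_succ]
    have h1 : (k : ℤ) - 1 = ((k-1 : ℕ) : ℤ) := by omega
    have h2 : (k : ℤ) + 1 = ((k+1 : ℕ) : ℤ) := by push_cast; ring
    rw [h1, h2, ih _ (by omega), ih _ (by omega)]
    ring

lemma dyck_self : ∀ (n : ℕ), dyckGF T n (n : ℤ) = 1 := by
  intro n
  induction n with
  | zero => rw [dyckGF]; simp
  | succ n ih =>
    rw [dyck_succ]
    have h1 : ((n+1 : ℕ) : ℤ) - 1 = (n : ℤ) := by push_cast; ring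
    have h2 : ((n+1 : ℕ) : ℤ) + 1 = ((n+2 : ℕ) : ℤ) := by push_cast; ring
    rw [h1, h2, ih, dyck_gt T n (n+2) (by omega)]
    ring

lemma dyck_parity : ∀ (n : ℕ) (k : ℕ), (n + k) % 2 = 1 → dyckGF T n (k : ℤ) = 0 := by
  intro n
  induction n with
  | zero => intro k hk; rw [dyckGF]; simp; omega
  | succ n ih =>
    intro k hk
    rw [dyck_succ]
    cases k with
    | zero =>
      have h1 : ((0:ℕ) : ℤ) - 1 = -1 := by norm_num
      have h2 : ((0:ℕ) : ℤ) + 1 = ((1 : ℕ) : ℤ) := by norm_num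
      rw [h1, h2, dyck_neg T n (-1) (by omega), ih 1 (by omega)]
      ring
    | succ j =>
      have h1 : ((j+1 : ℕ) : ℤ) - 1 = (j : ℤ) := by push_cast; ring
      have h2 : ((j+1 : ℕ) : ℤ) + 1 = ((j+2 : ℕ) : ℤ) := by push_cast; ring
      rw [h1, h2, ih j (by omega), ih (j+2) (by omega)]
      ring


noncomputable def W (k : ℕ) : ℝ := ∏ j ∈ Finset.range k, T j

lemma W_succ (k : ℕ) : W T (k+1) = W T k * T k := Finset.prod_range_succ _ _

lemma W_zero : W T 0 = 1 := rfl

/-- `E p k = W k * c(p,k)`: generating function of paths from height `k` down to `0`. -/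
noncomputable def E (p k : ℕ) : ℝ := W T k * dyckGF T p (k : ℤ)

lemma E_succ (p k : ℕ) :
    E T (p+1) k = E T p (k+1) + (if k = 0 then 0 else T (k-1) * E T p (k-1)) := by
  unfold E
  rw [dyck_succ]
  cases k with
  | zero =>
    have h1 : ((0:ℕ) : ℤ) - 1 = -1 := by norm_num
    have h2 : ((0:ℕ) : ℤ) + 1 = ((1 : ℕ) : ℤ) := by norm_num
    rw [h1, h2, dyck_neg T p (-1) (by omega)]
    simp [W_zero, W_succ]
  | succ j =>
    have h1 : ((j+1 : ℕ) : ℤ) - 1 = (j : ℤ) := by push_cast; ring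
    have h2 : ((j+1 : ℕ) : ℤ) + 1 = ((j+2 : ℕ) : ℤ) := by push_cast; ring
    rw [h1, h2]
    simp only [Nat.succ_ne_zero, if_false, Nat.add_sub_cancel]
    rw [W_succ T (j+1), W_succ T j]
    ring

lemma step (m p : ℕ) :
    ∑ k ∈ Finset.range (m+2), dyckGF T (m+1) (k : ℤ) * E T p k
      = ∑ k ∈ Finset.range (m+1), dyckGF T m (k : ℤ) * E T (p+1) k := by
  have hsummand : ∀ k : ℕ,
      dyckGF T (m+1) (k : ℤ) * E T p k
        = dyckGF T m ((k:ℤ)-1) * E T p k + T k * dyckGF T m ((k:ℤ)+1) * E T p k := by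
    intro k; rw [dyck_succ]; ring
  simp only [hsummand]
  rw [Finset.sum_add_distrib]
  have hsummand2 : ∀ k : ℕ,
      dyckGF T m (k : ℤ) * E T (p+1) k
        = dyckGF T m (k : ℤ) * E T p (k+1)
          + dyckGF T m (k : ℤ) * (if k = 0 then 0 else T (k-1) * E T p (k-1)) := by
    intro k; rw [E_succ]; ring
  simp only [hsummand2]
  rw [Finset.sum_add_distrib]
  congr 1
  · -- first sums
    rw [Finset.sum_range_succ' (fun k => dyckGF T m ((k:ℤ)-1) * E T p k) (m+1)]
    have h0 : ((0:ℕ) : ℤ) - 1 = -1 := by norm_num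
    rw [h0, dyck_neg T m (-1) (by omega)]
    simp only [zero_mul, add_zero]
    refine Finset.sum_congr rfl fun j _ => ?_
    have h1 : ((j+1 : ℕ) : ℤ) - 1 = (j : ℤ) := by push_cast; ring
    rw [h1]
  · -- second sums
    rw [Finset.sum_range_succ (fun k => T k * dyckGF T m ((k:ℤ)+1) * E T p k) (m+1),
        Finset.sum_range_succ (fun k => T k * dyckGF T m ((k:ℤ)+1) * E T p k) m]
    have hm : ((m:ℕ):ℤ) + 1 = ((m+1 : ℕ) : ℤ) := by push_cast; ring
    have hm1 : ((m+1:ℕ):ℤ) + 1 = ((m+2 : ℕ) : ℤ) := by push_cast; ring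
    rw [hm, hm1, dyck_gt T m (m+1) (by omega), dyck_gt T m (m+2) (by omega),
      Finset.sum_range_succ' (fun k => dyckGF T m (k : ℤ) *
          (if k = 0 then 0 else T (k-1) * E T p (k-1))) m]
    simp only [mul_zero, zero_mul, add_zero, Nat.succ_ne_zero, if_false, if_pos,
      Nat.add_sub_cancel, reduceIte]
    refine Finset.sum_congr rfl fun j _ => ?_
    push_cast
    ring

lemma split (m p : ℕ) :
    dyckGF T (m+p) 0 = ∑ k ∈ Finset.range (m+1), dyckGF T m (k : ℤ) * E T p k := by
  induction m generalizing p with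
  | zero =>
    simp only [Finset.range_one, Finset.sum_singleton, Nat.cast_zero, zero_add]
    rw [show dyckGF T 0 (0:ℤ) = 1 by rw [dyckGF]; simp]
    unfold E
    rw [W_zero]
    simp
  | succ m ih =>
    rw [step, ← ih (p+1)]
    congr 1
    omega

lemma sum_even_odd (f : ℕ → ℝ) : ∀ (i : ℕ),
    ∑ k ∈ Finset.range (2*i), f k = ∑ ℓ ∈ Finset.range i, (f (2*ℓ) + f (2*ℓ+1)) := by
  intro i
  induction i with
  | zero => simp
  | succ i ih =>
    rw [show 2*(i+1) = (2*i+1)+1 by ring, Finset.sum_range_succ, Finset.sum_range_succ,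
      Finset.sum_range_succ, ih]
    ring

lemma split_odd (i p n : ℕ) (hi : i < n) :
    dyckGF T ((2*i+1)+p) 0
      = ∑ ℓ ∈ Finset.range n, dyckGF T (2*i+1) ((2*ℓ+1 : ℕ) : ℤ) * E T p (2*ℓ+1) := by
  rw [split]
  rw [show 2*i+1+1 = 2*(i+1) by ring, sum_even_odd]
  have heven : ∀ ℓ : ℕ, dyckGF T (2*i+1) ((2*ℓ : ℕ) : ℤ) * E T p (2*ℓ)
      + dyckGF T (2*i+1) ((2*ℓ+1 : ℕ) : ℤ) * E T p (2*ℓ+1)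
      = dyckGF T (2*i+1) ((2*ℓ+1 : ℕ) : ℤ) * E T p (2*ℓ+1) := by
    intro ℓ
    rw [dyck_parity T (2*i+1) (2*ℓ) (by omega)]
    ring
  simp only [heven]
  refine Finset.sum_subset (Finset.range_subset_range.mpr (by omega)) ?_
  intro ℓ _ hℓ
  rw [Finset.mem_range, not_lt] at hℓ
  rw [dyck_gt T (2*i+1) (2*ℓ+1) (by omega)]
  ring


variable (α : ℝ)

lemma gpoly_three : gpoly T α 3 = α + T 0 + T 1 := by
  show (if (1+2) % 2 = 0 then α else 1) * gpoly T α 2 + T 1 * gpoly T α 1 = _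
  show _ * ((if (0+2) % 2 = 0 then α else 1) * gpoly T α 1 + T 0 * gpoly T α 0) + _ = _
  norm_num [gpoly]

lemma gpoly_rec (m : ℕ) :
    gpoly T α (2*m+5)
      = (α + T (2*m+2) + T (2*m+3)) * gpoly T α (2*m+3)
        - T (2*m+1) * T (2*m+2) * gpoly T α (2*m+1) := by
  have h5 : gpoly T α (2*m+5)
      = (if (2*m+5) % 2 = 0 then α else 1) * gpoly T α (2*m+4) + T (2*m+3) * gpoly T α (2*m+3) := by
    show gpoly T α ((2*m+3)+2) = _
    rw [gpoly]
  have h4 : gpoly T α (2*m+4)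
      = (if (2*m+4) % 2 = 0 then α else 1) * gpoly T α (2*m+3) + T (2*m+2) * gpoly T α (2*m+2) := by
    show gpoly T α ((2*m+2)+2) = _
    rw [gpoly]
  have h3 : gpoly T α (2*m+3)
      = (if (2*m+3) % 2 = 0 then α else 1) * gpoly T α (2*m+2) + T (2*m+1) * gpoly T α (2*m+1) := by
    show gpoly T α ((2*m+1)+2) = _
    rw [gpoly]
  rw [if_neg (by omega)] at h5
  rw [if_pos (by omega)] at h4
  rw [if_neg (by omega)] at h3
  rw [h5, h4]
  have h2 : gpoly T α (2*m+2) = gpoly T α (2*m+3) - T (2*m+1) * gpoly T α (2*m+1) := by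
    rw [h3]; ring
  rw [h2]
  ring

/-- Continuant with offset: `cont a u n s` is the determinant of the `n×n`
tridiagonal matrix with diagonal `a (s+i)` and product of off-diagonals `u`. -/
noncomputable def cont (a u : ℕ → ℝ) : ℕ → ℕ → ℝ
  | 0, _ => 1
  | 1, s => a s
  | (n+2), s => a s * cont a u (n+1) (s+1) - u s * cont a u n (s+2)

lemma cont_tail (a u : ℕ → ℝ) : ∀ (n : ℕ) (s : ℕ),
    (cont a u (n+2) s = a (s+n+1) * cont a u (n+1) s - u (s+n) * cont a u n s) ∧
    (cont a u (n+3) s = a (s+n+2) * cont a u (n+2) s - u (s+n+1) * cont a u (n+1) s) := by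
  intro n
  induction n with
  | zero =>
    intro s
    constructor
    · show a s * cont a u 1 (s+1) - u s * cont a u 0 (s+2) = _
      show a s * a (s+1) - u s * 1 = a (s+0+1) * a s - u (s+0) * 1
      ring_nf
    · show a s * cont a u 2 (s+1) - u s * cont a u 1 (s+2) = _
      show a s * (a (s+1) * cont a u 1 (s+2) - u (s+1) * cont a u 0 (s+3)) - u s * a (s+2)
        = a (s+0+2) * cont a u 2 s - u (s+0+1) * cont a u 1 s
      show a s * (a (s+1) * a (s+2) - u (s+1) * 1) - u s * a (s+2)
        = a (s+0+2) * (a s * cont a u 1 (s+1) - u s * cont a u 0 (s+2)) - u (s+0+1) * a s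
      show a s * (a (s+1) * a (s+2) - u (s+1) * 1) - u s * a (s+2)
        = a (s+0+2) * (a s * a (s+1) - u s * 1) - u (s+0+1) * a s
      ring_nf
  | succ n ih =>
    intro s
    refine ⟨(ih s).2, ?_⟩
    have e1 : cont a u (n+4) s = a s * cont a u (n+3) (s+1) - u s * cont a u (n+2) (s+2) := by
      show cont a u ((n+2)+2) s = _
      rw [cont]
    have e2 := (ih (s+1)).2
    have e3 := (ih (s+2)).1
    have e4 : cont a u (n+3) s = a s * cont a u (n+2) (s+1) - u s * cont a u (n+1) (s+2) := by
      show cont a u ((n+1)+2) s = _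
      rw [cont]
    have e5 : cont a u (n+2) s = a s * cont a u (n+1) (s+1) - u s * cont a u n (s+2) := by
      rw [cont]
    rw [e1, e2, e3, e4, e5]
    ring_nf

/-- The `m×m` tridiagonal matrix with diagonal `a (s+i)`, subdiagonal `B (s+j)`,
superdiagonal `C (s+i)`. -/
noncomputable def tri (a B C : ℕ → ℝ) (m s : ℕ) : Matrix (Fin m) (Fin m) ℝ :=
  Matrix.of fun i j =>
    if (i : ℕ) = (j : ℕ) then a (s + i)
    else if (i : ℕ) = (j : ℕ) + 1 then B (s + j)
    else if (j : ℕ) = (i : ℕ) + 1 then C (s + i) else 0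

lemma tri_shift (a B C : ℕ → ℝ) (m s : ℕ) :
    (tri a B C (m+1) s).submatrix Fin.succ Fin.succ = tri a B C m (s+1) := by
  ext i j
  simp only [Matrix.submatrix_apply, tri, Matrix.of_apply, Fin.val_succ]
  split_ifs <;> first | rfl | omega | (congr 1; omega)

lemma det_tri (a B C : ℕ → ℝ) : ∀ (m s : ℕ),
    (tri a B C m s).det = cont a (fun t => C t * B t) m s := by
  intro m
  induction m using Nat.strong_induction_on with
  | _ m ih =>
    match m with
    | 0 => intro s; simp [cont, Matrix.det_fin_zero]
    | 1 =>
      intro s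
      rw [Matrix.det_fin_one]
      show tri a B C 1 s 0 0 = a s
      simp [tri]
    | (k+2) =>
      intro s
      rw [Matrix.det_succ_row_zero, Fin.sum_univ_succ, Fin.sum_univ_succ]
      have hz : ∀ j : Fin k, tri a B C (k+2) s 0 (Fin.succ (Fin.succ j)) = 0 := by
        intro j
        simp [tri]
      simp only [hz, mul_zero, zero_mul, Finset.sum_const_zero, add_zero]
      have e00 : tri a B C (k+2) s 0 0 = a s := by
        simp [tri]
      have e01 : tri a B C (k+2) s 0 (Fin.succ 0) = C s := by
        simp [tri]
      have m0 : ((tri a B C (k+2) s).submatrix Fin.succ ((0 : Fin (k+2)).succAbove)).det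
          = cont a (fun t => C t * B t) (k+1) (s+1) := by
        rw [Fin.succAbove_zero, tri_shift, ih (k+1) (by omega)]
      -- second minor
      have m1 : ((tri a B C (k+2) s).submatrix Fin.succ ((Fin.succ 0 : Fin (k+2)).succAbove)).det
          = B s * cont a (fun t => C t * B t) k (s+2) := by
        rw [Matrix.det_succ_column_zero, Fin.sum_univ_succ]
        have hcol : ∀ i : Fin k,
            (tri a B C (k+2) s).submatrix Fin.succ ((Fin.succ 0 : Fin (k+2)).succAbove)
              (Fin.succ i) 0 = 0 := by
          intro i
          have h0 : ((Fin.succ 0 : Fin (k+2)).succAbove (0 : Fin (k+1))) = 0 := by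
            ext
            simp [Fin.succAbove, Fin.lt_def]
          simp only [Matrix.submatrix_apply, h0]
          simp [tri]
        simp only [hcol, mul_zero, zero_mul, Finset.sum_const_zero, add_zero]
        have hent : (tri a B C (k+2) s).submatrix Fin.succ ((Fin.succ 0 : Fin (k+2)).succAbove)
            (0 : Fin (k+1)) 0 = B s := by
          have h0 : ((Fin.succ 0 : Fin (k+2)).succAbove (0 : Fin (k+1))) = 0 := by
            ext
            simp [Fin.succAbove, Fin.lt_def]
          simp only [Matrix.submatrix_apply, h0]
          simp [tri]
        rw [hent]
        have hmm : (((tri a B C (k+2) s).submatrix Fin.succ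
              ((Fin.succ 0 : Fin (k+2)).succAbove)).submatrix
                ((0 : Fin (k+1)).succAbove) Fin.succ) = tri a B C k (s+2) := by
          rw [Fin.succAbove_zero, Matrix.submatrix_submatrix]
          ext i j
          have hg : ((Fin.succ 0 : Fin (k+2)).succAbove (Fin.succ j)) = Fin.succ (Fin.succ j) := by
            ext
            simp [Fin.succAbove, Fin.lt_def]
          simp only [Matrix.submatrix_apply, Function.comp_apply, hg]
          simp only [tri, Matrix.of_apply, Fin.val_succ]
          split_ifs <;> first | rfl | omega | (congr 1; omega)
        rw [hmm, ih k (by omega)]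
        simp
      rw [e00, e01, m0, m1]
      have hc : cont a (fun t => C t * B t) (k+2) s
          = a s * cont a (fun t => C t * B t) (k+1) (s+1)
            - (C s * B s) * cont a (fun t => C t * B t) k (s+2) := by
        rw [cont]
      rw [hc]
      simp
      ring


/-- Diagonal entries of the tridiagonal matrix. -/
noncomputable def aa (ℓ : ℕ) : ℝ := W T (2*ℓ+1) * (α + T (2*ℓ) + T (2*ℓ+1))
/-- Subdiagonal entries. -/
noncomputable def bb (ℓ : ℕ) : ℝ := W T (2*ℓ+3)
/-- Superdiagonal entries. -/
noncomputable def cc (ℓ : ℕ) : ℝ := W T (2*ℓ+1) * T (2*ℓ+1) * T (2*ℓ+2)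

lemma cont_gpoly : ∀ n : ℕ,
    (cont (aa T α) (fun t => cc T t * bb T t) n 0
        = gpoly T α (2*n+1) * ∏ ℓ ∈ Finset.range n, W T (2*ℓ+1)) ∧
    (cont (aa T α) (fun t => cc T t * bb T t) (n+1) 0
        = gpoly T α (2*(n+1)+1) * ∏ ℓ ∈ Finset.range (n+1), W T (2*ℓ+1)) := by
  intro n
  induction n with
  | zero =>
    constructor
    · show (1:ℝ) = gpoly T α 1 * ∏ ℓ ∈ Finset.range 0, W T (2*ℓ+1)
      simp [gpoly]
    · show aa T α 0 = gpoly T α 3 * ∏ ℓ ∈ Finset.range 1, W T (2*ℓ+1)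
      rw [gpoly_three]
      simp [aa]
      ring
  | succ n ih =>
    refine ⟨ih.2, ?_⟩
    have ht := (cont_tail (aa T α) (fun t => cc T t * bb T t) n 0).1
    simp only [Nat.zero_add] at ht
    rw [show n+1+1 = n+2 by ring, ht, ih.1, ih.2]
    have hg : gpoly T α (2*(n+2)+1)
        = (α + T (2*n+2) + T (2*n+3)) * gpoly T α (2*(n+1)+1)
          - T (2*n+1) * T (2*n+2) * gpoly T α (2*n+1) := by
      rw [show 2*(n+2)+1 = 2*n+5 by ring, show 2*(n+1)+1 = 2*n+3 by ring]
      exact gpoly_rec T α n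
    rw [hg, Finset.prod_range_succ, Finset.prod_range_succ, Finset.prod_range_succ]
    unfold aa bb cc
    simp only [show 2*(n+1)+1 = 2*n+3 by ring, show 2*(n+1) = 2*n+2 by ring]
    ring

lemma dyck_two_step (p ℓ : ℕ) :
    dyckGF T (p+2) ((2*ℓ+1 : ℕ) : ℤ)
      = dyckGF T p ((2*ℓ : ℤ) - 1)
        + (T (2*ℓ) + T (2*ℓ+1)) * dyckGF T p ((2*ℓ+1 : ℕ) : ℤ)
        + T (2*ℓ+1) * T (2*ℓ+2) * dyckGF T p ((2*ℓ+3 : ℕ) : ℤ) := by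
  rw [dyck_succ T (p+1) (2*ℓ+1)]
  have h1 : ((2*ℓ+1 : ℕ) : ℤ) - 1 = ((2*ℓ : ℕ) : ℤ) := by push_cast; ring
  have h2 : ((2*ℓ+1 : ℕ) : ℤ) + 1 = ((2*ℓ+2 : ℕ) : ℤ) := by push_cast; ring
  rw [h1, h2, dyck_succ T p (2*ℓ), dyck_succ T p (2*ℓ+2)]
  have h3 : ((2*ℓ : ℕ) : ℤ) + 1 = ((2*ℓ+1 : ℕ) : ℤ) := by push_cast; ring
  have h4 : ((2*ℓ+2 : ℕ) : ℤ) - 1 = ((2*ℓ+1 : ℕ) : ℤ) := by push_cast; ring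
  have h5 : ((2*ℓ+2 : ℕ) : ℤ) + 1 = ((2*ℓ+3 : ℕ) : ℤ) := by push_cast; ring
  have h6 : ((2*ℓ : ℕ) : ℤ) - 1 = (2*ℓ : ℤ) - 1 := by push_cast; ring
  rw [h3, h4, h5, h6]
  ring

lemma sum_range_ite (f : ℕ → ℝ) (n v : ℕ) :
    ∑ m ∈ Finset.range n, (if m = v then f m else 0) = if v < n then f v else 0 := by
  rw [Finset.sum_ite_eq' (Finset.range n) v f]
  simp [Finset.mem_range]

lemma tri_mul_apply (a B C : ℕ → ℝ) (n : ℕ) (X : ℕ → ℝ) (ℓ : Fin n) :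
    (∑ m : Fin n, tri a B C n 0 ℓ m * X (m : ℕ))
      = a ℓ * X ℓ + (if (ℓ:ℕ) = 0 then 0 else B ((ℓ:ℕ)-1) * X ((ℓ:ℕ)-1))
        + (if (ℓ:ℕ)+1 < n then C ℓ * X ((ℓ:ℕ)+1) else 0) := by
  have hconv : (∑ m : Fin n, tri a B C n 0 ℓ m * X (m : ℕ))
      = ∑ m ∈ Finset.range n,
          ((if ((ℓ:ℕ) : ℕ) = m then a (0 + (ℓ:ℕ)) else if (ℓ:ℕ) = m + 1 then B (0 + m)
            else if m = (ℓ:ℕ) + 1 then C (0 + (ℓ:ℕ)) else 0) * X m) := by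
    rw [← Fin.sum_univ_eq_sum_range]
    refine Finset.sum_congr rfl fun m _ => ?_
    simp [tri]
  rw [hconv]
  have hdec : ∀ m ∈ Finset.range n,
      ((if ((ℓ:ℕ) : ℕ) = m then a (0 + (ℓ:ℕ)) else if (ℓ:ℕ) = m + 1 then B (0 + m)
          else if m = (ℓ:ℕ) + 1 then C (0 + (ℓ:ℕ)) else 0) * X m)
        = (if m = (ℓ:ℕ) then a (ℓ:ℕ) * X m else 0)
          + ((if (ℓ:ℕ) = 0 then (0:ℝ) else if m = (ℓ:ℕ)-1 then B m * X m else 0))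
          + (if m = (ℓ:ℕ)+1 then C (ℓ:ℕ) * X m else 0) := by
    intro m _
    simp only [Nat.zero_add]
    split_ifs <;> (try (exfalso; omega)) <;> ring
  rw [Finset.sum_congr rfl hdec]
  rw [Finset.sum_add_distrib, Finset.sum_add_distrib]
  congr 1
  · congr 1
    · rw [sum_range_ite, if_pos ℓ.isLt]
    · by_cases h0 : (ℓ:ℕ) = 0
      · simp [h0]
      · rw [if_neg h0]
        rw [Finset.sum_congr rfl (fun m _ => by rw [if_neg h0])]
        rw [sum_range_ite (fun m => B m * X m) n ((ℓ:ℕ)-1), if_pos (by omega : (ℓ:ℕ)-1 < n)]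
  · rw [sum_range_ite (fun m => C (ℓ:ℕ) * X m) n ((ℓ:ℕ)+1)]


lemma key_entry (n : ℕ) (ℓ j : Fin n) :
    (∑ m : Fin n, tri (aa T α) (bb T) (cc T) n 0 ℓ m
        * dyckGF T (2*(j:ℕ)+1) ((2*(m:ℕ)+1 : ℕ) : ℤ))
      = α * E T (2*(j:ℕ)+1) (2*(ℓ:ℕ)+1) + E T (2*(j:ℕ)+3) (2*(ℓ:ℕ)+1) := by
  rw [tri_mul_apply (aa T α) (bb T) (cc T) n
      (fun m => dyckGF T (2*(j:ℕ)+1) ((2*m+1 : ℕ) : ℤ)) ℓ]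
  unfold E aa bb cc
  rw [show 2*(j:ℕ)+3 = (2*(j:ℕ)+1)+2 by ring, dyck_two_step]
  by_cases h0 : (ℓ:ℕ) = 0 <;> by_cases h1 : (ℓ:ℕ)+1 < n
  · rw [if_pos h0, if_pos h1, h0]
    rw [dyck_neg T (2*(j:ℕ)+1) (2*((0:ℕ):ℤ) - 1) (by norm_num)]
    norm_num
    ring
  · rw [if_pos h0, if_neg h1, h0]
    rw [dyck_neg T (2*(j:ℕ)+1) (2*((0:ℕ):ℤ) - 1) (by norm_num)]
    rw [dyck_gt T (2*(j:ℕ)+1) (2*(0:ℕ)+3) (by omega)]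
    norm_num
    ring
  · rw [if_neg h0, if_pos h1]
    obtain ⟨t, ht⟩ : ∃ t, (ℓ:ℕ) = t+1 := ⟨(ℓ:ℕ)-1, by omega⟩
    rw [ht]
    have hc : (2*((t+1 : ℕ) : ℤ) - 1) = ((2*t+1 : ℕ) : ℤ) := by push_cast; ring
    rw [hc]
    simp only [Nat.add_sub_cancel]
    rw [show 2*(t+1)+3 = 2*t+5 by ring, show 2*(t+1)+1 = 2*t+3 by ring,
      show 2*(t+1) = 2*t+2 by ring, show 2*t+3 = (2*t+1)+2 by ring,
      show (2*t+1)+2+1 = 2*t+1+3 by ring]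
    rw [W_succ T (2*t+2), W_succ T (2*t+1)]
    rw [show 2*t+1+1 = 2*t+2 by ring]
    ring
  · rw [if_neg h0, if_neg h1]
    obtain ⟨t, ht⟩ : ∃ t, (ℓ:ℕ) = t+1 := ⟨(ℓ:ℕ)-1, by omega⟩
    have hj : (j:ℕ) < n := j.isLt
    rw [dyck_gt T (2*(j:ℕ)+1) (2*(ℓ:ℕ)+3) (by omega)]
    rw [ht]
    have hc : (2*((t+1 : ℕ) : ℤ) - 1) = ((2*t+1 : ℕ) : ℤ) := by push_cast; ring
    rw [hc]
    simp only [Nat.add_sub_cancel]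
    rw [show 2*(t+1)+1 = 2*t+3 by ring, show 2*(t+1) = 2*t+2 by ring,
      show 2*t+3 = (2*t+1)+2 by ring]
    rw [W_succ T (2*t+2), W_succ T (2*t+1)]
    rw [show 2*t+1+1 = 2*t+2 by ring]
    ring

/-- The lower-triangular matrix `A i ℓ = c(2i+1, 2ℓ+1)`. -/
noncomputable def Amat (n : ℕ) : Matrix (Fin n) (Fin n) ℝ :=
  Matrix.of fun i ℓ : Fin n => dyckGF T (2*(i:ℕ)+1) ((2*(ℓ:ℕ)+1 : ℕ) : ℤ)

noncomputable def ATmat (n : ℕ) : Matrix (Fin n) (Fin n) ℝ :=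
  Matrix.of fun ℓ j : Fin n => dyckGF T (2*(j:ℕ)+1) ((2*(ℓ:ℕ)+1 : ℕ) : ℤ)

noncomputable def R1mat (n : ℕ) : Matrix (Fin n) (Fin n) ℝ :=
  Matrix.of fun ℓ j : Fin n => E T (2*(j:ℕ)+1) (2*(ℓ:ℕ)+1)

noncomputable def R2mat (n : ℕ) : Matrix (Fin n) (Fin n) ℝ :=
  Matrix.of fun ℓ j : Fin n =>
    α * E T (2*(j:ℕ)+1) (2*(ℓ:ℕ)+1) + E T (2*(j:ℕ)+3) (2*(ℓ:ℕ)+1)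

lemma det_Amat (n : ℕ) : (Amat T n).det = 1 := by
  have htri : (Amat T n).BlockTriangular OrderDual.toDual := by
    intro i ℓ h
    have hlt : (i:ℕ) < (ℓ:ℕ) := OrderDual.toDual_lt_toDual.mp h
    simp only [Amat, Matrix.of_apply]
    exact dyck_gt T _ _ (by omega)
  rw [Matrix.det_of_lowerTriangular (Amat T n) htri]
  refine Finset.prod_eq_one fun i _ => ?_
  simp only [Amat, Matrix.of_apply]
  exact dyck_self T (2*(i:ℕ)+1)

lemma det_ATmat (n : ℕ) : (ATmat T n).det = 1 := by
  have htri : (ATmat T n).BlockTriangular id := by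
    intro ℓ j h
    have hlt : (j:ℕ) < (ℓ:ℕ) := h
    simp only [ATmat, Matrix.of_apply]
    exact dyck_gt T _ _ (by omega)
  rw [Matrix.det_of_upperTriangular htri]
  refine Finset.prod_eq_one fun i _ => ?_
  simp only [ATmat, Matrix.of_apply]
  exact dyck_self T (2*(i:ℕ)+1)

lemma det_R1mat (n : ℕ) : (R1mat T n).det = ∏ ℓ ∈ Finset.range n, W T (2*ℓ+1) := by
  have h : R1mat T n = Matrix.of fun ℓ j : Fin n => W T (2*(ℓ:ℕ)+1) * ATmat T n ℓ j := by
    ext ℓ j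
    simp only [R1mat, ATmat, Matrix.of_apply, E]
  rw [h, Matrix.det_mul_column (fun ℓ : Fin n => W T (2*(ℓ:ℕ)+1)) (ATmat T n), det_ATmat,
    mul_one, Fin.prod_univ_eq_prod_range (fun ℓ => W T (2*ℓ+1)) n]

lemma det_R2mat (n : ℕ) :
    (R2mat T α n).det = gpoly T α (2*n+1) * ∏ ℓ ∈ Finset.range n, W T (2*ℓ+1) := by
  have h : R2mat T α n = tri (aa T α) (bb T) (cc T) n 0 * ATmat T n := by
    ext ℓ j
    rw [Matrix.mul_apply]
    simp only [R2mat, ATmat, Matrix.of_apply]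
    rw [← key_entry T α n ℓ j]
  rw [h, Matrix.det_mul, det_ATmat, mul_one, det_tri, (cont_gpoly T α n).1]

lemma Mfact (n : ℕ) :
    (Matrix.of fun i j : Fin n => dyckGF T (2 * ((i : ℕ) + (j : ℕ) + 1)) 0)
      = Amat T n * R1mat T n := by
  ext i j
  rw [Matrix.mul_apply]
  simp only [Amat, R1mat, Matrix.of_apply]
  rw [Fin.sum_univ_eq_sum_range
    (fun ℓ => dyckGF T (2*(i:ℕ)+1) ((2*ℓ+1 : ℕ) : ℤ) * E T (2*(j:ℕ)+1) (2*ℓ+1)) n]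
  rw [← split_odd T i (2*(j:ℕ)+1) n i.isLt]
  congr 1
  omega

lemma Nfact (n : ℕ) :
    (Matrix.of fun i j : Fin n =>
        α * dyckGF T (2 * ((i : ℕ) + (j : ℕ) + 1)) 0
          + dyckGF T (2 * ((i : ℕ) + (j : ℕ) + 2)) 0)
      = Amat T n * R2mat T α n := by
  ext i j
  rw [Matrix.mul_apply]
  simp only [Amat, R2mat, Matrix.of_apply]
  have hsum : ∀ ℓ : Fin n,
      dyckGF T (2*(i:ℕ)+1) ((2*(ℓ:ℕ)+1 : ℕ) : ℤ)
          * (α * E T (2*(j:ℕ)+1) (2*(ℓ:ℕ)+1) + E T (2*(j:ℕ)+3) (2*(ℓ:ℕ)+1))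
        = α * (dyckGF T (2*(i:ℕ)+1) ((2*(ℓ:ℕ)+1 : ℕ) : ℤ) * E T (2*(j:ℕ)+1) (2*(ℓ:ℕ)+1))
          + dyckGF T (2*(i:ℕ)+1) ((2*(ℓ:ℕ)+1 : ℕ) : ℤ) * E T (2*(j:ℕ)+3) (2*(ℓ:ℕ)+1) := by
    intro ℓ; ring
  rw [Finset.sum_congr rfl (fun ℓ _ => hsum ℓ), Finset.sum_add_distrib, ← Finset.mul_sum]
  rw [Fin.sum_univ_eq_sum_range
    (fun ℓ => dyckGF T (2*(i:ℕ)+1) ((2*ℓ+1 : ℕ) : ℤ) * E T (2*(j:ℕ)+1) (2*ℓ+1)) n]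
  rw [Fin.sum_univ_eq_sum_range
    (fun ℓ => dyckGF T (2*(i:ℕ)+1) ((2*ℓ+1 : ℕ) : ℤ) * E T (2*(j:ℕ)+3) (2*ℓ+1)) n]
  rw [← split_odd T i (2*(j:ℕ)+1) n i.isLt, ← split_odd T i (2*(j:ℕ)+3) n i.isLt]
  rw [show 2*(i:ℕ)+1+(2*(j:ℕ)+1) = 2*((i:ℕ)+(j:ℕ)+1) by ring,
    show 2*(i:ℕ)+1+(2*(j:ℕ)+3) = 2*((i:ℕ)+(j:ℕ)+2) by ring]

end HankelAux

/-- Eq. (3.6): for `n ≥ 1` and real `α`,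
`det(α c_{i+j+1} + c_{i+j+2})_{i,j=0}^{n-1} = g_{2n+1}(α) · det(c_{i+j+1})_{i,j=0}^{n-1}`. -/
theorem hankel_two_term_dyck_odd (T : ℕ → ℝ) (hT : ∀ n, T n ≠ 0)
    (n : ℕ) (hn : 0 < n) (α : ℝ) :
    Matrix.det (Matrix.of fun i j : Fin n =>
        α * dyckGF T (2 * ((i : ℕ) + (j : ℕ) + 1)) 0
          + dyckGF T (2 * ((i : ℕ) + (j : ℕ) + 2)) 0)
      = gpoly T α (2 * n + 1)
        * Matrix.det (Matrix.of fun i j : Fin n =>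
            dyckGF T (2 * ((i : ℕ) + (j : ℕ) + 1)) 0) := by
  rw [HankelAux.Mfact T n, HankelAux.Nfact T α n, Matrix.det_mul, Matrix.det_mul,
    HankelAux.det_Amat, one_mul, one_mul, HankelAux.det_R1mat, HankelAux.det_R2mat]
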